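/- arXiv:1907.03850 — 6 statements merged into one kernel-verified Lean document; each statement's English description precedes it below -/
import Mathlib

section
/- For every finite simple graph H there exist a natural number m, finite simple graphs F₁, …, F_m, and rational numbers λ₁, …, λ_m such that for every finite bipartite simple graph G, the number of homomorphisms from H to the line graph L(G) satisfies |Hom(H, L(G))| = Σ_{i=1}^{m} λᵢ · |Hom(Fᵢ, G)| (an equality of rational numbers). -/
/-!
Fix a proper 2-colouring `c` of `G`. A homomorphism `H → L(G)` together with a colour for each
connected component of `H` is the same as a map `d` from `V(H)` to the darts of `G` such that, for
every edge `uv` of `H`, the darts `d u` and `d v` have the same tail or the same head, but not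
both: orient the edge `h v` so that its tail has the colour chosen for the component of `v`. This
gives a factor `2 ^ #components`. Writing the indicator of "exactly one of `a`, `b`" as
`[a] + [b] - 2 [a ∧ b]` and expanding the product over the darts of `H` turns the count of such
`d` into a signed sum of counts of maps `V(H) ⊕ V(H) → V(G)` that send every `(inl v, inr v)` to
an edge and identify prescribed pairs of vertices. Each of these is the number of homomorphisms
into `G` from a quotient of the perfect matching on `V(H) ⊕ V(H)`, or `0` when some `inl v` gets
identified with `inr v`.
-/

open SimpleGraph Sum

/-- `[Xor a b] = [a] + [b] - 2 [a ∧ b]`, indexed by which of `a`, `b` are imposed. -/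
def xorWeight : Bool × Bool → ℤ
  | (false, false) => 0
  | (true, true) => -2
  | _ => 1

theorem ite_xor_eq_sum (a b : Prop) [Decidable a] [Decidable b] :
    (if Xor a b then 1 else 0 : ℤ) =
      ∑ s : Bool × Bool, xorWeight s * if (s.1 → a) ∧ (s.2 → b) then 1 else 0 := by
  by_cases ha : a <;> by_cases hb : b <;> simp [ha, hb, xorWeight, Fintype.sum_prod_type]

theorem natCard_subtype_forall_xor {ι α : Type*} [Fintype ι] [DecidableEq ι] [Finite α]
    (A B : ι → α → Prop) :
    (Nat.card {x // ∀ i, Xor (A i x) (B i x)} : ℤ) =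
      ∑ t : ι → Bool × Bool, (∏ i, xorWeight (t i)) *
        Nat.card {x // ∀ i, ((t i).1 → A i x) ∧ ((t i).2 → B i x)} := by
  classical
  have := Fintype.ofFinite α
  simp only [Nat.card_eq_fintype_card, Fintype.card_subtype, Finset.natCast_card_filter,
    Finset.mul_sum]
  rw [Finset.sum_comm]
  refine Finset.sum_congr rfl fun x _ => ?_
  simp only [← Fintype.prod_boole, ite_xor_eq_sum, Fintype.prod_sum, ← Finset.prod_mul_distrib]

namespace SimpleGraph.Coloring

variable {W : Type*} {G : SimpleGraph W} (c : G.Coloring (Fin 2))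

theorem apply_snd_eq_iff (d₁ d₂ : G.Dart) : c d₁.snd = c d₂.snd ↔ c d₁.fst = c d₂.fst := by
  have h₁ := c.valid d₁.adj
  have h₂ := c.valid d₂.adj
  omega

theorem fst_ne_snd_of_apply_eq {d₁ d₂ : G.Dart} (h : c d₁.fst = c d₂.fst) : d₁.fst ≠ d₂.snd :=
  fun he => c.valid d₂.adj (h ▸ congrArg c he)

theorem dart_eq_of_edge_eq {d₁ d₂ : G.Dart} (he : d₁.edge = d₂.edge)
    (h : c d₁.fst = c d₂.fst) : d₁ = d₂ :=
  ((dart_edge_eq_iff d₁ d₂).1 he).resolve_right fun hs =>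
    c.fst_ne_snd_of_apply_eq h (by rw [hs]; rfl)

theorem existsUnique_dart (e : G.edgeSet) (i : Fin 2) :
    ∃! d : G.Dart, d.edge = e ∧ c d.fst = i := by
  obtain ⟨⟨a, b⟩, hab⟩ := e
  have hex : ∃ d : G.Dart, d.edge = s(a, b) ∧ c d.fst = i := by
    by_cases ha : c a = i
    · exact ⟨⟨(a, b), hab⟩, rfl, ha⟩
    · have : c a ≠ c b := c.valid hab
      exact ⟨⟨(b, a), hab.symm⟩, Sym2.eq_swap, by change c b = i; omega⟩
  obtain ⟨d, hd⟩ := hex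
  exact ⟨d, hd, fun d' hd' => c.dart_eq_of_edge_eq (hd'.1.trans hd.1.symm) (hd'.2.trans hd.2.symm)⟩

noncomputable def orient (e : G.edgeSet) (i : Fin 2) : G.Dart :=
  (c.existsUnique_dart e i).exists.choose

theorem edge_orient (e : G.edgeSet) (i : Fin 2) : (c.orient e i).edge = e :=
  (c.existsUnique_dart e i).exists.choose_spec.1

theorem apply_orient_fst (e : G.edgeSet) (i : Fin 2) : c (c.orient e i).fst = i :=
  (c.existsUnique_dart e i).exists.choose_spec.2

theorem orient_edge_apply_fst (d : G.Dart) : c.orient ⟨d.edge, d.edge_mem⟩ (c d.fst) = d :=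
  (c.existsUnique_dart _ _).unique ⟨c.edge_orient _ _, c.apply_orient_fst _ _⟩ ⟨rfl, rfl⟩

theorem lineGraph_adj_iff_xor {d₁ d₂ : G.Dart} (h : c d₁.fst = c d₂.fst) :
    G.lineGraph.Adj ⟨d₁.edge, d₁.edge_mem⟩ ⟨d₂.edge, d₂.edge_mem⟩ ↔
      Xor (d₁.fst = d₂.fst) (d₁.snd = d₂.snd) := by
  have hne : d₁.edge ≠ d₂.edge ↔ ¬(d₁.fst = d₂.fst ∧ d₁.snd = d₂.snd) := by
    rw [← Prod.ext_iff, ← Dart.ext_iff]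
    exact not_congr ⟨fun he => c.dart_eq_of_edge_eq he h, congrArg Dart.edge⟩
  have hmem : (∃ v, v ∈ d₁.edge ∧ v ∈ d₂.edge) ↔ d₁.fst = d₂.fst ∨ d₁.snd = d₂.snd := by
    have h₁₂ := c.fst_ne_snd_of_apply_eq h
    have h₂₁ := c.fst_ne_snd_of_apply_eq h.symm
    simp only [Dart.edge, Sym2.mem_iff]
    constructor
    · rintro ⟨v, rfl | rfl, h | h⟩ <;> simp_all
    · rintro (he | he)
      exacts [⟨_, Or.inl rfl, Or.inl he⟩, ⟨_, Or.inr rfl, Or.inr he⟩]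
  rw [lineGraph_adj_iff_exists, xor_iff_or_and_not_and, ne_eq, Subtype.mk.injEq, ← ne_eq, hne,
    hmem, and_comm]

theorem apply_fst_eq_of_xor {d₁ d₂ : G.Dart} (h : Xor (d₁.fst = d₂.fst) (d₁.snd = d₂.snd)) :
    c d₁.fst = c d₂.fst := by
  rcases ((xor_iff_or_and_not_and _ _).1 h).1 with he | he
  · rw [he]
  · exact (c.apply_snd_eq_iff d₁ d₂).1 (by rw [he])

variable {V : Type*} {H : SimpleGraph V}

noncomputable def lineGraphHomEquiv :
    (H →g G.lineGraph) × (H.ConnectedComponent → Fin 2) ≃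
      {d : V → G.Dart //
        ∀ p : H.Dart, Xor ((d p.fst).fst = (d p.snd).fst) ((d p.fst).snd = (d p.snd).snd)} where
  toFun x := ⟨fun v => c.orient (x.1 v) (x.2 (H.connectedComponentMk v)), fun p => by
    dsimp only
    rw [← ConnectedComponent.connectedComponentMk_eq_of_adj p.adj,
      ← c.lineGraph_adj_iff_xor (by simp only [apply_orient_fst])]
    convert x.1.map_adj p.adj <;> exact c.edge_orient _ _⟩
  invFun d := (⟨fun v => ⟨(d.1 v).edge, (d.1 v).edge_mem⟩, fun {u v} huv =>
      (c.lineGraph_adj_iff_xor (c.apply_fst_eq_of_xor (d.2 ⟨(u, v), huv⟩))).2 (d.2 ⟨(u, v), huv⟩)⟩,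
    ConnectedComponent.lift (fun v => c (d.1 v).fst) fun _ _ p hp => by
      clear hp
      induction p with
      | nil => rfl
      | cons huv _ ih => exact (c.apply_fst_eq_of_xor (d.2 ⟨(_, _), huv⟩)).trans ih)
  left_inv x := by
    refine Prod.ext (RelHom.ext fun v => Subtype.ext (c.edge_orient _ _)) (funext fun C => ?_)
    induction C using ConnectedComponent.ind
    exact c.apply_orient_fst _ _
  right_inv d := Subtype.ext (funext fun v => c.orient_edge_apply_fst (d.1 v))

end SimpleGraph.Coloring

namespace SimpleGraph

section QuotientGraph

variable {ι α W : Type*} (ends : ι → α × α) (r : α → α → Prop)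

def quotientGraph : SimpleGraph (Quot r) :=
  fromRel fun a b => ∃ i, Quot.mk r (ends i).1 = a ∧ Quot.mk r (ends i).2 = b

variable {ends r} {G : SimpleGraph W}

def homQuotientGraphEquiv (h : ∀ i, Quot.mk r (ends i).1 ≠ Quot.mk r (ends i).2) :
    {g : α → W // (∀ i, G.Adj (g (ends i).1) (g (ends i).2)) ∧ ∀ x y, r x y → g x = g y} ≃
      (quotientGraph ends r →g G) where
  toFun g := ⟨Quot.lift g.1 g.2.2, by
    rintro _ _ ⟨-, ⟨i, rfl, rfl⟩ | ⟨i, rfl, rfl⟩⟩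
    exacts [g.2.1 i, (g.2.1 i).symm]⟩
  invFun φ := ⟨φ ∘ Quot.mk r, fun i => φ.map_adj ⟨h i, Or.inl ⟨i, rfl, rfl⟩⟩,
    fun _ _ hxy => congrArg φ (Quot.sound hxy)⟩
  left_inv _ := rfl
  right_inv φ := RelHom.ext (Quot.ind fun _ => rfl)

theorem natCard_subtype_adj_and_eq_of_rel
    [Decidable (∃ i, Quot.mk r (ends i).1 = Quot.mk r (ends i).2)] :
    Nat.card {g : α → W // (∀ i, G.Adj (g (ends i).1) (g (ends i).2)) ∧ ∀ x y, r x y → g x = g y} =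
      if ∃ i, Quot.mk r (ends i).1 = Quot.mk r (ends i).2 then 0
      else Nat.card (quotientGraph ends r →g G) := by
  split_ifs with h
  · obtain ⟨i, hi⟩ := h
    exact Nat.card_eq_zero.2
      (Or.inl ⟨fun g => (g.2.1 i).ne (congrArg (Quot.lift g.1 g.2.2) hi)⟩)
  · push Not at h
    exact Nat.card_congr (homQuotientGraphEquiv h)

end QuotientGraph

section Pattern

variable {V W : Type*} {H : SimpleGraph V} {G : SimpleGraph W}

/-- `(t p).1` (resp. `(t p).2`) imposes equal tails (resp. heads) on the darts over the ends of
the dart `p`; `inl v` and `inr v` stand for the tail and the head of the dart over `v`. -/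
inductive PatternRel (t : H.Dart → Bool × Bool) : V ⊕ V → V ⊕ V → Prop
  | fst (p : H.Dart) : (t p).1 → PatternRel t (inl p.fst) (inl p.snd)
  | snd (p : H.Dart) : (t p).2 → PatternRel t (inr p.fst) (inr p.snd)

def patternGraph (t : H.Dart → Bool × Bool) : SimpleGraph (Quot (PatternRel t)) :=
  quotientGraph (fun v => (inl v, inr v)) (PatternRel t)

open Classical in
noncomputable def patternWeight [Fintype V] (t : H.Dart → Bool × Bool) : ℤ :=
  if ∃ v, Quot.mk (PatternRel t) (inl v) = Quot.mk (PatternRel t) (inr v) then 0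
  else ∏ p, xorWeight (t p)

def dartsPatternEquiv (t : H.Dart → Bool × Bool) :
    {d : V → G.Dart // ∀ p : H.Dart,
      ((t p).1 → (d p.fst).fst = (d p.snd).fst) ∧ ((t p).2 → (d p.fst).snd = (d p.snd).snd)} ≃
    {g : V ⊕ V → W // (∀ v, G.Adj (g (inl v)) (g (inr v))) ∧
      ∀ x y, PatternRel t x y → g x = g y} where
  toFun d := ⟨Sum.elim (fun v => (d.1 v).fst) (fun v => (d.1 v).snd), fun v => (d.1 v).adj, by
    rintro _ _ (⟨p, hp⟩ | ⟨p, hp⟩)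
    exacts [(d.2 p).1 hp, (d.2 p).2 hp]⟩
  invFun g := ⟨fun v => ⟨(g.1 (inl v), g.1 (inr v)), g.2.1 v⟩,
    fun p => ⟨fun hp => g.2.2 _ _ (.fst p hp), fun hp => g.2.2 _ _ (.snd p hp)⟩⟩
  left_inv _ := rfl
  right_inv g := Subtype.ext (funext fun x => by cases x <;> rfl)

open Classical in
theorem Coloring.natCard_hom_lineGraph_mul [Fintype V] [Fintype W] (c : G.Coloring (Fin 2)) :
    (Nat.card (H →g G.lineGraph) * Nat.card (H.ConnectedComponent → Fin 2) : ℤ) =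
      ∑ t : H.Dart → Bool × Bool, patternWeight t * Nat.card (patternGraph t →g G) := by
  rw [← Nat.cast_mul, ← Nat.card_prod, Nat.card_congr c.lineGraphHomEquiv,
    natCard_subtype_forall_xor]
  refine Finset.sum_congr rfl fun t _ => ?_
  rw [Nat.card_congr (dartsPatternEquiv t),
    natCard_subtype_adj_and_eq_of_rel (ends := fun v => (inl v, inr v)), patternWeight]
  by_cases hD : ∃ v, Quot.mk (PatternRel t) (inl v) = Quot.mk (PatternRel t) (inr v)
  · simp only [if_pos hD, Nat.cast_zero, mul_zero, zero_mul]
  · simp only [if_neg hD]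
    rfl

end Pattern

end SimpleGraph

/-- For every finite simple graph `H` there exist finitely many finite simple graphs
`F₁, …, F_m` and rationals `λ₁, …, λ_m` such that for every finite bipartite graph `G`,
`|Hom(H, L(G))| = Σᵢ λᵢ · |Hom(Fᵢ, G)|`. -/
theorem stmt3 {V : Type} [Fintype V] (H : SimpleGraph V) :
    ∃ (m : ℕ) (n : Fin m → ℕ) (F : ∀ i : Fin m, SimpleGraph (Fin (n i))) (lam : Fin m → ℚ),
      ∀ (W : Type) [Fintype W] (G : SimpleGraph W), G.Colorable 2 →
        (Nat.card (H →g G.lineGraph) : ℚ) = ∑ i, lam i * (Nat.card (F i →g G) : ℚ) := by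
  classical
  let e := Fintype.equivFin (H.Dart → Bool × Bool)
  let K : ℚ := Nat.card (H.ConnectedComponent → Fin 2)
  have hK : K ≠ 0 := Nat.cast_ne_zero.2 Nat.card_pos.ne'
  refine ⟨_, fun i => Nat.card (Quot (PatternRel (e.symm i))),
    fun i => (patternGraph (e.symm i)).comap (Finite.equivFin _).symm,
    fun i => patternWeight (e.symm i) / K, fun W _ G hG => ?_⟩
  have hcount := congrArg (Int.cast : ℤ → ℚ) (hG.some.natCard_hom_lineGraph_mul (H := H))
  push_cast at hcount
  apply mul_right_cancel₀ hK
  rw [hcount, ← e.symm.sum_comp, Finset.sum_mul]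
  refine Finset.sum_congr rfl fun i _ => ?_
  rw [Nat.card_congr ((Iso.comap _ _).homCongr .refl)]
  field_simp
end

section
/- Let F and G be finite bipartite simple graphs, and suppose F has no isolated vertices. Then the number of subsets S of the vertex set of the line graph L(G) (equivalently, subsets of the edge set of G) such that the induced subgraph of L(G) on S is isomorphic to L(F) is equal to the number of subgraphs of G isomorphic to F (equivalently, since F has no isolated vertices, to the number of subsets T of the edge set of G such that the graph whose vertex set consists of all endpoints of edges in T and whose edge set is T is isomorphic to F). -/
/-!
A set `S` of edges of `G` determines the subgraph formed by these edges and their endpoints; this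
is a bijection onto the subgraphs without isolated vertices, and `L(G)[S]` is the line graph of
that subgraph. It remains to see that for triangle-free graphs `H`, `F` without isolated vertices,
`L(H) ≃ L(F)` implies `H ≃ F` (Whitney). Given `φ : L(H) ≃ L(F)`, send a vertex `v` of `H` to a
vertex of `F` whose edges are exactly the images of the edges at `v`: for `v` of degree at least
two, the common vertex of these images, which exists since pairwise intersecting edges of a
triangle-free graph share a vertex; for a pendant vertex, the end of the image edge lying on no
other edge; the two ends of an isolated edge go to the two ends of its image. This vertex map is a
bijection preserving adjacency.
-/

open SimpleGraph Function

theorem Sym2.eq_of_mem_of_mem_of_ne {α : Type*} {z z' : Sym2 α} {x y : α} (h : z ≠ z')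
    (hx : x ∈ z) (hx' : x ∈ z') (hy : y ∈ z) (hy' : y ∈ z') : x = y :=
  by_contra fun hxy => h (Sym2.eq_of_ne_mem hxy hx hy hx' hy')

namespace SimpleGraph

variable {α β : Type*} {G₁ : SimpleGraph α} {G₂ : SimpleGraph β}

theorem CliqueFree.exists_mem_of_pairwise_mem {G : SimpleGraph α} (hG : G.CliqueFree 3)
    {a b c : Sym2 α} (ha : a ∈ G.edgeSet) (hb : b ∈ G.edgeSet) (hc : c ∈ G.edgeSet) {x y z : α}
    (hxa : x ∈ a) (hxb : x ∈ b) (hyb : y ∈ b) (hyc : y ∈ c) (hza : z ∈ a) (hzc : z ∈ c) :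
    ∃ w, w ∈ a ∧ w ∈ b ∧ w ∈ c := by
  by_cases hxy : x = y
  · exact ⟨x, hxa, hxb, hxy ▸ hyc⟩
  by_cases hxz : x = z
  · exact ⟨x, hxa, hxb, hxz ▸ hzc⟩
  by_cases hyz : y = z
  · exact ⟨y, hyz ▸ hza, hyb, hyc⟩
  classical
  exact (hG {x, y, z} (is3Clique_triple_iff.mpr
    ⟨G.adj_of_mem_incidenceSet hxy ⟨hb, hxb⟩ ⟨hb, hyb⟩,
      G.adj_of_mem_incidenceSet hxz ⟨ha, hxa⟩ ⟨ha, hza⟩,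
      G.adj_of_mem_incidenceSet hyz ⟨hc, hyc⟩ ⟨hc, hzc⟩⟩)).elim

section LineGraphIso

variable (φ : G₁.lineGraph ≃g G₂.lineGraph)

theorem exists_mem_lineGraphIso_apply {e f : G₁.edgeSet} (hef : e ≠ f) {x : α}
    (he : x ∈ (e : Sym2 α)) (hf : x ∈ (f : Sym2 α)) :
    ∃ y, y ∈ (φ e : Sym2 β) ∧ y ∈ (φ f : Sym2 β) :=
  (lineGraph_adj_iff_exists.mp (φ.map_adj_iff.mpr (lineGraph_adj_iff_exists.mpr
    ⟨hef, x, he, hf⟩))).2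

theorem coe_lineGraphIso_apply_ne {e f : G₁.edgeSet} (hef : e ≠ f) :
    (φ e : Sym2 β) ≠ φ f :=
  fun h => hef (φ.injective (Subtype.ext h))

def StarsCorrespond (v : α) (w : β) : Prop :=
  ∀ e : G₁.edgeSet, v ∈ (e : Sym2 α) ↔ w ∈ (φ e : Sym2 β)

theorem mem_lineGraphIso_apply_of_mem (h₂ : G₂.CliqueFree 3) {v : α} {w : β}
    {e f : G₁.edgeSet} (hef : e ≠ f) (hve : v ∈ (e : Sym2 α)) (hvf : v ∈ (f : Sym2 α))
    (hwe : w ∈ (φ e : Sym2 β)) (hwf : w ∈ (φ f : Sym2 β)) {g : G₁.edgeSet}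
    (hvg : v ∈ (g : Sym2 α)) : w ∈ (φ g : Sym2 β) := by
  by_cases hge : g = e
  · exact hge ▸ hwe
  by_cases hgf : g = f
  · exact hgf ▸ hwf
  obtain ⟨y, hyf, hyg⟩ := exists_mem_lineGraphIso_apply φ (Ne.symm hgf) hvf hvg
  obtain ⟨z, hze, hzg⟩ := exists_mem_lineGraphIso_apply φ (Ne.symm hge) hve hvg
  obtain ⟨u, hue, huf, hug⟩ := h₂.exists_mem_of_pairwise_mem (φ e).2 (φ f).2 (φ g).2
    hwe hwf hyf hyg hze hzg
  rwa [Sym2.eq_of_mem_of_mem_of_ne (coe_lineGraphIso_apply_ne φ hef) hwe hwf hue huf]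

theorem starsCorrespond_of_mem_of_mem (h₁ : G₁.CliqueFree 3) (h₂ : G₂.CliqueFree 3)
    {v : α} {w : β} {e f : G₁.edgeSet} (hef : e ≠ f) (hve : v ∈ (e : Sym2 α))
    (hvf : v ∈ (f : Sym2 α)) (hwe : w ∈ (φ e : Sym2 β)) (hwf : w ∈ (φ f : Sym2 β)) :
    StarsCorrespond φ v w := by
  refine fun g => ⟨mem_lineGraphIso_apply_of_mem φ h₂ hef hve hvf hwe hwf, fun hwg => ?_⟩
  have := mem_lineGraphIso_apply_of_mem φ.symm h₁ (φ.injective.ne hef) hwe hwf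
    (by rwa [RelIso.symm_apply_apply]) (by rwa [RelIso.symm_apply_apply]) hwg
  rwa [RelIso.symm_apply_apply] at this

/-- If both endpoints `a`, `b` of `φ e` lay on other edges, these would be the images of two
edges through the other endpoint of `e`, whose images all pass through one vertex: `a = b`. -/
theorem exists_starsCorrespond_of_unique_edge (h₂ : G₂.CliqueFree 3) {v : α} {e : G₁.edgeSet}
    (hve : v ∈ (e : Sym2 α)) (he : ∀ g : G₁.edgeSet, v ∈ (g : Sym2 α) → g = e) :
    ∃ w, StarsCorrespond φ v w := by
  suffices h : ∃ w ∈ (φ e : Sym2 β), ∀ g, g ≠ e → w ∉ (φ g : Sym2 β) by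
    obtain ⟨w, hwe, hw⟩ := h
    exact ⟨w, fun g => ⟨fun hvg => he g hvg ▸ hwe,
      fun hwg => by_contra fun hge => hw g (fun h => hge (h ▸ hve)) hwg⟩⟩
  by_contra! h
  set x := Sym2.Mem.other hve
  have hx : ∀ g, g ≠ e → ∀ c ∈ (φ e : Sym2 β), c ∈ (φ g : Sym2 β) → x ∈ (g : Sym2 α) := by
    intro g hge c hce hcg
    obtain ⟨z, hzg, hze⟩ := exists_mem_lineGraphIso_apply φ.symm (φ.injective.ne hge) hcg hce
    rw [RelIso.symm_apply_apply] at hzg hze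
    rw [← Sym2.other_spec hve, Sym2.mem_iff] at hze
    rcases hze with rfl | rfl
    · exact absurd (he g hzg) hge
    · exact hzg
  set a := (φ e : Sym2 β).out.1
  set b := Sym2.Mem.other (Sym2.out_fst_mem (φ e : Sym2 β))
  have hb : b ∈ (φ e : Sym2 β) := Sym2.other_mem _
  have hab : b ≠ a := Sym2.other_ne (G₂.not_isDiag_of_mem_edgeSet (φ e).2) _
  obtain ⟨ga, hgae, haga⟩ := h a (Sym2.out_fst_mem _)
  obtain ⟨gb, hgbe, hbgb⟩ := h b hb
  have hgab : ga ≠ gb := by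
    rintro rfl
    exact hgae (φ.injective (Subtype.ext (Sym2.eq_of_ne_mem hab.symm haga hbgb
      (Sym2.out_fst_mem _) hb)))
  have hxa := hx ga hgae a (Sym2.out_fst_mem _) haga
  have hxb := hx gb hgbe b hb hbgb
  obtain ⟨y, hya, hyb⟩ := exists_mem_lineGraphIso_apply φ hgab hxa hxb
  have hye := mem_lineGraphIso_apply_of_mem φ h₂ hgab hxa hxb hya hyb (Sym2.other_mem hve)
  have hne_a := coe_lineGraphIso_apply_ne φ hgae
  have hne_b := coe_lineGraphIso_apply_ne φ hgbe
  exact hab ((Sym2.eq_of_mem_of_mem_of_ne hne_b hbgb hb hyb hye).trans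
    (Sym2.eq_of_mem_of_mem_of_ne hne_a hya hye haga (Sym2.out_fst_mem _)))

theorem exists_starsCorrespond (h₁ : G₁.CliqueFree 3) (h₂ : G₂.CliqueFree 3)
    (hG₁ : ∀ v, ∃ u, G₁.Adj v u) (v : α) : ∃ w, StarsCorrespond φ v w := by
  obtain ⟨u, hu⟩ := hG₁ v
  set e : G₁.edgeSet := ⟨s(v, u), hu⟩
  by_cases h : ∃ f : G₁.edgeSet, v ∈ (f : Sym2 α) ∧ f ≠ e
  · obtain ⟨f, hvf, hfe⟩ := h
    obtain ⟨w, hwf, hwe⟩ := exists_mem_lineGraphIso_apply φ hfe hvf (Sym2.mem_mk_left v u)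
    exact ⟨w, starsCorrespond_of_mem_of_mem φ h₁ h₂ hfe hvf (Sym2.mem_mk_left v u) hwf hwe⟩
  · push Not at h
    exact exists_starsCorrespond_of_unique_edge φ h₂ (Sym2.mem_mk_left v u) h

theorem exists_starsCorrespond_of_isolated {e : G₁.edgeSet}
    (he : ∀ z ∈ (e : Sym2 α), ∀ g : G₁.edgeSet, z ∈ (g : Sym2 α) → g = e)
    {v : α} (hve : v ∈ (e : Sym2 α)) :
    ∃ w, StarsCorrespond φ v w ∧ (v = (e : Sym2 α).out.1 ↔ w = (φ e : Sym2 β).out.1) := by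
  have hcorr : ∀ w ∈ (φ e : Sym2 β), StarsCorrespond φ v w := by
    refine fun w hwe g => ⟨fun hvg => he v hve g hvg ▸ hwe, fun hwg => ?_⟩
    by_cases hge : g = e
    · exact hge ▸ hve
    obtain ⟨z, hzg, hze⟩ := exists_mem_lineGraphIso_apply φ.symm (φ.injective.ne hge) hwg hwe
    rw [RelIso.symm_apply_apply] at hzg hze
    exact absurd (he z hze g hzg) hge
  have ha := Sym2.out_fst_mem (φ e : Sym2 β)
  by_cases hv : v = (e : Sym2 α).out.1
  · exact ⟨_, hcorr _ ha, iff_of_true hv rfl⟩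
  · refine ⟨_, hcorr _ (Sym2.other_mem ha), iff_of_false hv ?_⟩
    exact Sym2.other_ne (G₂.not_isDiag_of_mem_edgeSet (φ e).2) ha

theorem exists_injective_starsCorrespond (h₁ : G₁.CliqueFree 3) (h₂ : G₂.CliqueFree 3)
    (hG₁ : ∀ v, ∃ u, G₁.Adj v u) :
    ∃ ψ : α → β, Injective ψ ∧ ∀ v, StarsCorrespond φ v (ψ v) := by
  -- Two vertices with the same star are the ends of an isolated edge; the orientation condition
  -- sends them to different ends of its image.
  have key : ∀ v, ∃ w, StarsCorrespond φ v w ∧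
      ∀ u, u ≠ v → (∀ e : G₁.edgeSet, u ∈ (e : Sym2 α) ↔ v ∈ (e : Sym2 α)) →
      ∀ e : G₁.edgeSet, v ∈ (e : Sym2 α) →
        (v = (e : Sym2 α).out.1 ↔ w = (φ e : Sym2 β).out.1) := by
    intro v
    by_cases htwin : ∃ u ≠ v, ∀ e : G₁.edgeSet, u ∈ (e : Sym2 α) ↔ v ∈ (e : Sym2 α)
    · obtain ⟨u, huv, hu⟩ := htwin
      obtain ⟨x, hx⟩ := hG₁ v
      set e : G₁.edgeSet := ⟨s(v, x), hx⟩
      have hve : v ∈ (e : Sym2 α) := Sym2.mem_mk_left v x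
      have hue : u ∈ (e : Sym2 α) := (hu e).mpr hve
      have hunique : ∀ g : G₁.edgeSet, v ∈ (g : Sym2 α) → g = e := fun g hvg =>
        Subtype.ext (Sym2.eq_of_ne_mem huv ((hu g).mpr hvg) hvg hue hve)
      have hisolated : ∀ z ∈ (e : Sym2 α), ∀ g : G₁.edgeSet, z ∈ (g : Sym2 α) → g = e := by
        intro z hz g hzg
        rw [(Sym2.mem_and_mem_iff huv).mp ⟨hue, hve⟩, Sym2.mem_iff] at hz
        rcases hz with rfl | rfl
        · exact hunique g ((hu g).mp hzg)
        · exact hunique g hzg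
      obtain ⟨w, hw, horient⟩ := exists_starsCorrespond_of_isolated φ hisolated hve
      exact ⟨w, hw, fun _ _ _ g hvg => hunique g hvg ▸ horient⟩
    · exact (exists_starsCorrespond φ h₁ h₂ hG₁ v).imp fun w hw =>
        ⟨hw, fun u huv hu => absurd ⟨u, huv, hu⟩ htwin⟩
  choose ψ hψ hψo using key
  refine ⟨ψ, fun u v huv => by_contra fun hne => ?_, hψ⟩
  have hsame : ∀ e : G₁.edgeSet, u ∈ (e : Sym2 α) ↔ v ∈ (e : Sym2 α) := fun e =>
    (hψ u e).trans (huv ▸ (hψ v e).symm)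
  obtain ⟨x, hx⟩ := hG₁ u
  set e : G₁.edgeSet := ⟨s(u, x), hx⟩
  have hue : u ∈ (e : Sym2 α) := Sym2.mem_mk_left u x
  have hve : v ∈ (e : Sym2 α) := (hsame e).mp hue
  have hu := hψo u v (Ne.symm hne) (fun g => (hsame g).symm) e hue
  rw [huv, ← hψo v u hne hsame e hve] at hu
  have ho := Sym2.out_fst_mem (e : Sym2 α)
  by_cases hu₁ : u = (e : Sym2 α).out.1
  · exact hne (hu₁.trans (hu.mp hu₁).symm)
  · exact hne (Sym2.congr_left.mp (((Sym2.mem_and_mem_iff hu₁).mp ⟨hue, ho⟩).symm.trans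
      ((Sym2.mem_and_mem_iff (mt hu.mpr hu₁)).mp ⟨hve, ho⟩)))

theorem nonempty_iso_of_starsCorrespond (hG₂ : ∀ w, ∃ u, G₂.Adj w u) {ψ : α → β}
    (hψ : Injective ψ) (hcorr : ∀ v, StarsCorrespond φ v (ψ v)) : Nonempty (G₁ ≃g G₂) := by
  have hmap : ∀ e : G₁.edgeSet, (φ e : Sym2 β) = (e : Sym2 α).map ψ := by
    rintro ⟨z, hz⟩
    induction z using Sym2.ind with
    | h a b =>
      rw [Sym2.map_mk]
      exact (Sym2.mem_and_mem_iff (hψ.ne (G₁.ne_of_adj hz))).mp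
        ⟨(hcorr a _).mp (Sym2.mem_mk_left a b), (hcorr b _).mp (Sym2.mem_mk_right a b)⟩
  have hsurj : Surjective ψ := by
    intro w
    obtain ⟨u, hu⟩ := hG₂ w
    have hw : w ∈ (φ (φ.symm ⟨s(w, u), hu⟩) : Sym2 β) := by
      rw [RelIso.apply_symm_apply]
      exact Sym2.mem_mk_left w u
    obtain ⟨v, -, hv⟩ := Sym2.mem_map.mp (hmap _ ▸ hw)
    exact ⟨v, hv⟩
  refine ⟨⟨Equiv.ofBijective ψ ⟨hψ, hsurj⟩, fun {a b} => ⟨fun h => ?_, fun h => ?_⟩⟩⟩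
  · set e := φ.symm ⟨s(ψ a, ψ b), h⟩
    have he : (φ e : Sym2 β) = s(ψ a, ψ b) := by simp [e]
    exact G₁.adj_of_mem_incidenceSet (hψ.ne_iff.mp h.ne)
      ⟨e.2, (hcorr a e).mpr (he ▸ Sym2.mem_mk_left _ _)⟩
      ⟨e.2, (hcorr b e).mpr (he ▸ Sym2.mem_mk_right _ _)⟩
  · have h' := (φ ⟨s(a, b), h⟩).2
    rwa [hmap, Sym2.map_mk] at h'

end LineGraphIso

theorem nonempty_iso_of_lineGraph_iso (h₁ : G₁.CliqueFree 3) (h₂ : G₂.CliqueFree 3)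
    (hG₁ : ∀ v, ∃ u, G₁.Adj v u) (hG₂ : ∀ w, ∃ u, G₂.Adj w u)
    (φ : G₁.lineGraph ≃g G₂.lineGraph) : Nonempty (G₁ ≃g G₂) :=
  have ⟨_, hψ, hcorr⟩ := exists_injective_starsCorrespond φ h₁ h₂ hG₁
  nonempty_iso_of_starsCorrespond φ hG₂ hψ hcorr

end SimpleGraph

namespace SimpleGraph.Subgraph

variable {V : Type*} {G : SimpleGraph V}

def ofEdges (S : Set G.edgeSet) : G.Subgraph where
  verts := {v | ∃ e ∈ S, v ∈ (e : Sym2 V)}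
  Adj v w := ∃ h : G.Adj v w, ⟨s(v, w), h⟩ ∈ S
  adj_sub h := h.1
  edge_vert := fun ⟨_, hS⟩ => ⟨_, hS, Sym2.mem_mk_left _ _⟩
  symm := ⟨fun _ _ ⟨h, hS⟩ =>
    ⟨h.symm, (Subtype.ext Sym2.eq_swap : (⟨s(_, _), h⟩ : G.edgeSet) = ⟨s(_, _), h.symm⟩) ▸ hS⟩⟩

@[simp]
theorem mem_verts_ofEdges {S : Set G.edgeSet} {v : V} :
    v ∈ (ofEdges S).verts ↔ ∃ e ∈ S, v ∈ (e : Sym2 V) :=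
  Iff.rfl

@[simp]
theorem ofEdges_adj {S : Set G.edgeSet} {v w : V} :
    (ofEdges S).Adj v w ↔ ∃ h : G.Adj v w, ⟨s(v, w), h⟩ ∈ S :=
  Iff.rfl

theorem mem_edgeSet_ofEdges {S : Set G.edgeSet} {e : G.edgeSet} :
    (e : Sym2 V) ∈ (ofEdges S).edgeSet ↔ e ∈ S := by
  obtain ⟨z, hz⟩ := e
  induction z using Sym2.ind with
  | h v w => exact ⟨fun h => (ofEdges_adj.mp h).2, fun hS => ofEdges_adj.mpr ⟨hz, hS⟩⟩

theorem setOf_mem_edgeSet_ofEdges (S : Set G.edgeSet) :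
    {e : G.edgeSet | (e : Sym2 V) ∈ (ofEdges S).edgeSet} = S :=
  Set.ext fun _ => mem_edgeSet_ofEdges

theorem exists_adj_ofEdges (S : Set G.edgeSet) (v : (ofEdges S).verts) :
    ∃ u, (ofEdges S).coe.Adj v u := by
  obtain ⟨v, hv⟩ := v
  obtain ⟨e, heS, hve⟩ := mem_verts_ofEdges.mp hv
  have hadj := mem_edgeSet_ofEdges.mpr heS
  rw [← Sym2.other_spec hve, Subgraph.mem_edgeSet] at hadj
  exact ⟨⟨_, hadj.snd_mem⟩, hadj⟩

theorem ofEdges_eq (H : G.Subgraph) (hH : ∀ v : H.verts, ∃ u, H.coe.Adj v u) :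
    ofEdges {e : G.edgeSet | (e : Sym2 V) ∈ H.edgeSet} = H := by
  ext v
  · rw [mem_verts_ofEdges]
    refine ⟨fun ⟨e, he, hve⟩ => H.mem_verts_of_mem_edge he hve, fun hv => ?_⟩
    obtain ⟨u, hu⟩ := hH ⟨v, hv⟩
    exact ⟨⟨s(v, u), H.adj_sub hu⟩, hu, Sym2.mem_mk_left v u⟩
  · exact ⟨fun h => (ofEdges_adj.mp h).2, fun h => ofEdges_adj.mpr ⟨H.adj_sub h, h⟩⟩

variable (G) in
def ofEdgesEquiv : Set G.edgeSet ≃ {H : G.Subgraph // ∀ v : H.verts, ∃ u, H.coe.Adj v u} where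
  toFun S := ⟨ofEdges S, exists_adj_ofEdges S⟩
  invFun H := {e | (e : Sym2 V) ∈ H.1.edgeSet}
  left_inv := setOf_mem_edgeSet_ofEdges
  right_inv H := Subtype.ext (ofEdges_eq H.1 H.2)

theorem nonempty_lineGraph_coe_iso_induce (H : G.Subgraph) :
    Nonempty (H.coe.lineGraph ≃g
      G.lineGraph.induce {e : G.edgeSet | (e : Sym2 V) ∈ H.edgeSet}) := by
  have : Set.range H.coeCopy.toLineGraphEmbedding =
      {e : G.edgeSet | (e : Sym2 V) ∈ H.edgeSet} := by
    ext e
    rw [← H.image_coe_edgeSet_coe]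
    simp [Copy.toLineGraphEmbedding, Subtype.ext_iff, Subgraph.coeCopy]
  exact ⟨this ▸ H.coeCopy.toLineGraphEmbedding.isoInduceRange⟩

end SimpleGraph.Subgraph

theorem stmt4_general {V W : Type}
    (F : SimpleGraph V) (G : SimpleGraph W)
    (hF : F.Colorable 2) (hG : G.Colorable 2)
    (hiso : ∀ v : V, ∃ u : V, F.Adj v u) :
    Nat.card {S : Set G.edgeSet // Nonempty ((G.lineGraph.induce S) ≃g F.lineGraph)} =
      Nat.card {H : G.Subgraph // Nonempty (H.coe ≃g F)} := by
  have hF₃ : F.CliqueFree 3 := hF.cliqueFree (by norm_num)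
  have hG₃ : G.CliqueFree 3 := hG.cliqueFree (by norm_num)
  have hH : ∀ {H : G.Subgraph}, Nonempty (H.coe ≃g F) → ∀ v : H.verts, ∃ u, H.coe.Adj v u :=
    fun ⟨f⟩ v => (hiso (f v)).imp' f.symm fun u hu => f.map_adj_iff.mp (by simpa using hu)
  refine Nat.card_congr (((Subgraph.ofEdgesEquiv G).subtypeEquiv fun S => ?_).trans
    (Equiv.subtypeSubtypeEquivSubtype hH))
  obtain ⟨ι⟩ := Subgraph.nonempty_lineGraph_coe_iso_induce (Subgraph.ofEdges S)
  rw [Subgraph.setOf_mem_edgeSet_ofEdges] at ι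
  exact ⟨fun ⟨φ⟩ => nonempty_iso_of_lineGraph_iso
      (hG₃.comap (Subgraph.ofEdges S).coe_isContained) hF₃ (Subgraph.exists_adj_ofEdges S) hiso
      (ι.trans φ),
    fun ⟨f⟩ => ⟨ι.symm.trans f.lineGraph⟩⟩

/-- Let `F` and `G` be finite bipartite graphs, `F` without isolated vertices. The number of
vertex subsets `S` of the line graph `L(G)` whose induced subgraph is isomorphic to `L(F)`
equals the number of subgraphs of `G` isomorphic to `F`. -/
theorem stmt4 {V W : Type} [Fintype V] [Fintype W]
    (F : SimpleGraph V) (G : SimpleGraph W)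
    (hF : F.Colorable 2) (hG : G.Colorable 2)
    (hiso : ∀ v : V, ∃ u : V, F.Adj v u) :
    Nat.card {S : Set G.edgeSet // Nonempty ((G.lineGraph.induce S) ≃g F.lineGraph)} =
      Nat.card {H : G.Subgraph // Nonempty (H.coe ≃g F)} :=
  stmt4_general F G hF hG hiso
end

section
/- Let F and F' be finite bipartite simple graphs without isolated vertices. If the line graphs L(F) and L(F') are isomorphic, then F and F' are isomorphic. -/
/-!
In a triangle-free graph, the edges at a vertex `v` lying on two distinct edges `e₁, e₂` are
exactly the edges meeting both `e₁` and `e₂`. An isomorphism `φ` of line graphs preserves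
"meeting", so it maps the edges at a vertex of degree at least two onto the edges at some vertex
of the other graph; a triangle argument does the same for leaves. This yields a vertex map `f`
such that the edges at `f v` are the images of the edges at `v`, and these sets of edges
determine adjacency. Two vertices have the same edges only if they are the ends of an isolated
edge; choosing `f` there to preserve the 2-colourings makes it injective, and the map built from
`φ⁻¹` shows by counting that it is bijective.
-/

namespace SimpleGraph

variable {V W : Type*} {G : SimpleGraph V} {G' : SimpleGraph W}

def incidentEdges (G : SimpleGraph V) (v : V) : Set G.edgeSet := {e | v ∈ (e : Sym2 V)}

@[simp]
lemma mem_incidentEdges {v : V} {e : G.edgeSet} : e ∈ G.incidentEdges v ↔ v ∈ (e : Sym2 V) :=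
  Iff.rfl

lemma exists_adj_coe_eq (e : G.edgeSet) : ∃ a b, G.Adj a b ∧ (e : Sym2 V) = s(a, b) := by
  obtain ⟨e, he⟩ := e
  induction e using Sym2.ind with
  | _ a b => exact ⟨a, b, he, rfl⟩

lemma adj_of_mem_edge {e : G.edgeSet} {a b : V} (hab : a ≠ b)
    (ha : a ∈ (e : Sym2 V)) (hb : b ∈ (e : Sym2 V)) : G.Adj a b :=
  G.mem_edgeSet.1 ((Sym2.mem_and_mem_iff hab).1 ⟨ha, hb⟩ ▸ e.2)

lemma edge_eq_of_mem {e f : G.edgeSet} {a b : V} (hab : a ≠ b)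
    (hae : a ∈ (e : Sym2 V)) (hbe : b ∈ (e : Sym2 V))
    (haf : a ∈ (f : Sym2 V)) (hbf : b ∈ (f : Sym2 V)) : e = f :=
  Subtype.ext (Sym2.eq_of_ne_mem hab hae hbe haf hbf)

lemma incidentEdges_nonempty {u v : V} (h : G.Adj v u) : (G.incidentEdges v).Nonempty :=
  ⟨⟨s(v, u), h⟩, Sym2.mem_mk_left v u⟩

lemma adj_iff_ne_and_incidentEdges_inter_nonempty {a b : V} :
    G.Adj a b ↔ a ≠ b ∧ (G.incidentEdges a ∩ G.incidentEdges b).Nonempty := by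
  refine ⟨fun h => ⟨h.ne, ⟨s(a, b), h⟩, Sym2.mem_mk_left a b, Sym2.mem_mk_right a b⟩, ?_⟩
  rintro ⟨hab, e, ha, hb⟩
  exact adj_of_mem_edge hab ha hb

lemma adj_of_incidentEdges_eq {u v : V} (huv : u ≠ v)
    (h : G.incidentEdges u = G.incidentEdges v) (hv : (G.incidentEdges v).Nonempty) :
    G.Adj u v := by
  obtain ⟨e, he⟩ := hv
  exact adj_of_mem_edge huv (h ▸ he : e ∈ G.incidentEdges u) he

lemma incidentEdges_eq_singleton_of_eq {u v : V} (huv : u ≠ v)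
    (h : G.incidentEdges u = G.incidentEdges v) {e : G.edgeSet} (he : e ∈ G.incidentEdges v) :
    G.incidentEdges v = {e} :=
  Set.eq_singleton_iff_unique_mem.2
    ⟨he, fun d hd => edge_eq_of_mem huv (h ▸ hd : d ∈ G.incidentEdges u) hd
      (h ▸ he : e ∈ G.incidentEdges u) he⟩

lemma Iso.exists_mem_mem_lineGraph_iff (φ : G.lineGraph ≃g G'.lineGraph) (e f : G.edgeSet) :
    (∃ x, x ∈ (φ e : Sym2 W) ∧ x ∈ (φ f : Sym2 W)) ↔
      ∃ x, x ∈ (e : Sym2 V) ∧ x ∈ (f : Sym2 V) := by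
  rcases eq_or_ne e f with rfl | hne
  · exact iff_of_true ⟨_, Sym2.out_fst_mem _, Sym2.out_fst_mem _⟩
      ⟨_, Sym2.out_fst_mem _, Sym2.out_fst_mem _⟩
  · have := φ.map_adj_iff (v := e) (w := f)
    rwa [lineGraph_adj_iff_exists, lineGraph_adj_iff_exists, Ne, φ.injective.eq_iff,
      and_iff_right hne, and_iff_right hne] at this

lemma CliqueFree.mem_of_exists_mem_mem (hG : G.CliqueFree 3) {v : V} {e₁ e₂ e : G.edgeSet}
    (hne : e₁ ≠ e₂) (h₁ : v ∈ (e₁ : Sym2 V)) (h₂ : v ∈ (e₂ : Sym2 V))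
    (m₁ : ∃ x, x ∈ (e : Sym2 V) ∧ x ∈ (e₁ : Sym2 V))
    (m₂ : ∃ x, x ∈ (e : Sym2 V) ∧ x ∈ (e₂ : Sym2 V)) : v ∈ (e : Sym2 V) := by
  obtain ⟨a, hae, ha₁⟩ := m₁
  obtain ⟨b, hbe, hb₂⟩ := m₂
  classical
  by_contra hv
  have hav : a ≠ v := by rintro rfl; exact hv hae
  have hbv : b ≠ v := by rintro rfl; exact hv hbe
  have hab : a ≠ b := by rintro rfl; exact hne (edge_eq_of_mem hav ha₁ h₁ hb₂ h₂)
  exact hG {v, a, b} (is3Clique_triple_iff.2 ⟨adj_of_mem_edge hav.symm h₁ ha₁,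
    adj_of_mem_edge hbv.symm h₂ hb₂, adj_of_mem_edge hab hae hbe⟩)

lemma CliqueFree.incidentEdges_eq (hG : G.CliqueFree 3) {v : V} {e₁ e₂ : G.edgeSet}
    (hne : e₁ ≠ e₂) (h₁ : v ∈ (e₁ : Sym2 V)) (h₂ : v ∈ (e₂ : Sym2 V)) :
    G.incidentEdges v = {e : G.edgeSet | (∃ x, x ∈ (e : Sym2 V) ∧ x ∈ (e₁ : Sym2 V)) ∧
      ∃ x, x ∈ (e : Sym2 V) ∧ x ∈ (e₂ : Sym2 V)} := by
  ext e
  exact ⟨fun hv => ⟨⟨v, hv, h₁⟩, ⟨v, hv, h₂⟩⟩,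
    fun ⟨m₁, m₂⟩ => hG.mem_of_exists_mem_mem hne h₁ h₂ m₁ m₂⟩

lemma exists_image_incidentEdges_eq_of_ne (hG : G.CliqueFree 3) (hG' : G'.CliqueFree 3)
    (φ : G.lineGraph ≃g G'.lineGraph) {v : V} {e₁ e₂ : G.edgeSet} (hne : e₁ ≠ e₂)
    (h₁ : e₁ ∈ G.incidentEdges v) (h₂ : e₂ ∈ G.incidentEdges v) :
    ∃ w, φ '' G.incidentEdges v = G'.incidentEdges w := by
  obtain ⟨hne', w, hw₁, hw₂⟩ := lineGraph_adj_iff_exists.1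
    (φ.map_adj_iff.2 (lineGraph_adj_iff_exists.2 ⟨hne, v, h₁, h₂⟩))
  refine ⟨w, ?_⟩
  rw [hG.incidentEdges_eq hne h₁ h₂, hG'.incidentEdges_eq hne' hw₁ hw₂,
    RelIso.image_eq_preimage_symm]
  ext e'
  simp only [Set.mem_preimage, Set.mem_ofPred_eq]
  rw [← φ.exists_mem_mem_lineGraph_iff, ← φ.exists_mem_mem_lineGraph_iff]
  simp

lemma exists_incidentEdges_eq_singleton (hG' : G'.CliqueFree 3)
    (φ : G.lineGraph ≃g G'.lineGraph) {v : V} {e : G.edgeSet}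
    (hv : G.incidentEdges v = {e}) : ∃ w, G'.incidentEdges w = {φ e} := by
  have hve : v ∈ (e : Sym2 V) := (hv ▸ Set.mem_singleton e : e ∈ G.incidentEdges v)
  set u := Sym2.Mem.other hve
  have he : (e : Sym2 V) = s(v, u) := (Sym2.other_spec hve).symm
  have hu : ∀ e' : G'.edgeSet, e' ≠ φ e → (∃ x, x ∈ (e' : Sym2 W) ∧ x ∈ (φ e : Sym2 W)) →
      u ∈ (φ.symm e' : Sym2 V) := by
    intro e' hne hmeet
    rw [← φ.apply_symm_apply e', φ.exists_mem_mem_lineGraph_iff] at hmeet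
    obtain ⟨x, hxd, hxe⟩ := hmeet
    rw [he, Sym2.mem_iff] at hxe
    rcases hxe with rfl | rfl
    · have : φ.symm e' ∈ ({e} : Set G.edgeSet) := hv ▸ (hxd : φ.symm e' ∈ G.incidentEdges x)
      rw [Set.mem_singleton_iff] at this
      exact absurd (by rw [← this, φ.apply_symm_apply]) hne
    · exact hxd
  -- Otherwise both ends of `φ e` carry a second edge. Their preimages meet `e` away from `v`,
  -- hence both pass through `u`, so the two edges meet and close a triangle with `φ e`.
  by_contra! h
  have hother : ∀ w ∈ (φ e : Sym2 W), ∃ e' : G'.edgeSet, w ∈ (e' : Sym2 W) ∧ e' ≠ φ e := by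
    intro w hw
    by_contra! h'
    exact h w (Set.eq_singleton_iff_unique_mem.2 ⟨hw, h'⟩)
  obtain ⟨w₁, w₂, hw, hφe⟩ := exists_adj_coe_eq (φ e)
  have hw₁ : w₁ ∈ (φ e : Sym2 W) := hφe ▸ Sym2.mem_mk_left w₁ w₂
  have hw₂ : w₂ ∈ (φ e : Sym2 W) := hφe ▸ Sym2.mem_mk_right w₁ w₂
  obtain ⟨e₁, h₁, hne₁⟩ := hother w₁ hw₁
  obtain ⟨e₂, h₂, hne₂⟩ := hother w₂ hw₂
  have hmeet : ∃ x, x ∈ (e₂ : Sym2 W) ∧ x ∈ (e₁ : Sym2 W) := by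
    rw [← φ.apply_symm_apply e₂, ← φ.apply_symm_apply e₁, φ.exists_mem_mem_lineGraph_iff]
    exact ⟨u, hu e₂ hne₂ ⟨w₂, h₂, hw₂⟩, hu e₁ hne₁ ⟨w₁, h₁, hw₁⟩⟩
  have hw₁e₂ : w₁ ∈ (e₂ : Sym2 W) :=
    hG'.mem_of_exists_mem_mem hne₁ h₁ hw₁ hmeet ⟨w₂, h₂, hw₂⟩
  exact hne₂ (edge_eq_of_mem hw.ne hw₁e₂ h₂ hw₁ hw₂)

lemma exists_image_incidentEdges_eq (hG : G.CliqueFree 3) (hG' : G'.CliqueFree 3)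
    (φ : G.lineGraph ≃g G'.lineGraph) {v : V} (hv : (G.incidentEdges v).Nonempty) :
    ∃ w, φ '' G.incidentEdges v = G'.incidentEdges w := by
  rcases hv.exists_eq_singleton_or_nontrivial with ⟨e, he⟩ | ⟨e₁, h₁, e₂, h₂, hne⟩
  · obtain ⟨w, hw⟩ := exists_incidentEdges_eq_singleton hG' φ he
    exact ⟨w, by rw [he, Set.image_singleton, hw]⟩
  · exact exists_image_incidentEdges_eq_of_ne hG hG' φ hne h₁ h₂

lemma exists_ne_incidentEdges_eq_image (hG : G.CliqueFree 3) (hG' : G'.CliqueFree 3)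
    (φ : G.lineGraph ≃g G'.lineGraph) {u v : V} (huv : u ≠ v)
    (h : G.incidentEdges u = G.incidentEdges v) (hv : (G.incidentEdges v).Nonempty) :
    ∃ w₁ w₂, w₁ ≠ w₂ ∧ G'.incidentEdges w₁ = φ '' G.incidentEdges v ∧
      G'.incidentEdges w₂ = φ '' G.incidentEdges v := by
  obtain ⟨e, he⟩ := hv
  have hsingle : G.incidentEdges v = {e} := incidentEdges_eq_singleton_of_eq huv h he
  have he_eq : (e : Sym2 V) = s(u, v) :=
    (Sym2.mem_and_mem_iff huv).1 ⟨(h ▸ he : e ∈ G.incidentEdges u), he⟩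
  have hend : ∀ w ∈ (φ e : Sym2 W), G'.incidentEdges w = {φ e} := by
    intro w hw
    obtain ⟨z, hz⟩ := exists_image_incidentEdges_eq hG' hG φ.symm ⟨φ e, hw⟩
    have hez : e ∈ G.incidentEdges z := hz ▸ ⟨φ e, hw, φ.symm_apply_apply e⟩
    have hz_single : G.incidentEdges z = {e} := by
      rw [mem_incidentEdges, he_eq, Sym2.mem_iff] at hez
      rcases hez with rfl | rfl
      · rwa [h]
      · exact hsingle
    rw [← φ.toEquiv.image_symm_image (G'.incidentEdges w)]
    change φ '' (φ.symm '' _) = _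
    rw [hz, hz_single, Set.image_singleton]
  obtain ⟨w₁, w₂, hw, hφe⟩ := exists_adj_coe_eq (φ e)
  refine ⟨w₁, w₂, hw.ne, ?_, ?_⟩ <;> rw [hsingle, Set.image_singleton]
  · exact hend w₁ (hφe ▸ Sym2.mem_mk_left w₁ w₂)
  · exact hend w₂ (hφe ▸ Sym2.mem_mk_right w₁ w₂)

lemma exists_incidentEdges_eq_image_and_color (c : G.Coloring (Fin 2)) (c' : G'.Coloring (Fin 2))
    (hV : ∀ v, ∃ u, G.Adj v u) (φ : G.lineGraph ≃g G'.lineGraph) (v : V) :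
    ∃ w, G'.incidentEdges w = φ '' G.incidentEdges v ∧
      (c' w = c v ∨ ∀ u, G.incidentEdges u = G.incidentEdges v → u = v) := by
  have hG := c.colorable.cliqueFree (by norm_num : 2 < 3)
  have hG' := c'.colorable.cliqueFree (by norm_num : 2 < 3)
  obtain ⟨x, hvx⟩ := hV v
  have hne : (G.incidentEdges v).Nonempty := incidentEdges_nonempty hvx
  by_cases huniq : ∀ u, G.incidentEdges u = G.incidentEdges v → u = v
  · obtain ⟨w, hw⟩ := exists_image_incidentEdges_eq hG hG' φ hne
    exact ⟨w, hw.symm, Or.inr huniq⟩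
  push Not at huniq
  obtain ⟨u, h, huv⟩ := huniq
  obtain ⟨w₁, w₂, hw, h₁, h₂⟩ := exists_ne_incidentEdges_eq_image hG hG' φ huv h hne
  have hcol : c' w₁ ≠ c' w₂ := c'.valid (adj_of_incidentEdges_eq hw (h₁.trans h₂.symm)
    (by rw [h₂]; exact hne.image φ))
  -- The ends of an isolated edge of `G'` carry both colours.
  rcases (by decide : ∀ a b i : Fin 2, a ≠ b → a = i ∨ b = i) _ _ (c v) hcol with hc | hc
  · exact ⟨w₁, h₁, Or.inl hc⟩
  · exact ⟨w₂, h₂, Or.inl hc⟩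

lemma exists_injective_incidentEdges_eq_image (hG : G.Colorable 2) (hG' : G'.Colorable 2)
    (hV : ∀ v, ∃ u, G.Adj v u) (φ : G.lineGraph ≃g G'.lineGraph) :
    ∃ f : V → W, Function.Injective f ∧
      ∀ v, G'.incidentEdges (f v) = φ '' G.incidentEdges v := by
  obtain ⟨c⟩ := hG
  obtain ⟨c'⟩ := hG'
  choose f hf using exists_incidentEdges_eq_image_and_color c c' hV φ
  refine ⟨f, fun u v huv => ?_, fun v => (hf v).1⟩
  have h : G.incidentEdges u = G.incidentEdges v :=
    (Set.image_injective.2 φ.injective) (by rw [← (hf u).1, ← (hf v).1, huv])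
  by_contra hne
  obtain ⟨x, hvx⟩ := hV v
  have hcol : c u ≠ c v := c.valid (adj_of_incidentEdges_eq hne h (incidentEdges_nonempty hvx))
  rcases (hf u).2 with hcu | hu
  · rcases (hf v).2 with hcv | hv
    · exact hcol (hcu.symm.trans (huv ▸ hcv))
    · exact hne (hv u h)
  · exact hne (hu v h.symm).symm

lemma adj_iff_of_incidentEdges_eq_image (φ : G.lineGraph ≃g G'.lineGraph) {f : V → W}
    (hf : Function.Injective f) (hφf : ∀ v, G'.incidentEdges (f v) = φ '' G.incidentEdges v)
    (a b : V) : G'.Adj (f a) (f b) ↔ G.Adj a b := by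
  rw [adj_iff_ne_and_incidentEdges_inter_nonempty, adj_iff_ne_and_incidentEdges_inter_nonempty,
    hφf, hφf, ← Set.image_inter φ.injective, Set.image_nonempty, hf.ne_iff]

end SimpleGraph

open SimpleGraph

/-- Whitney's theorem for bipartite graphs: if `F` and `F'` are finite bipartite graphs
without isolated vertices and their line graphs are isomorphic, then `F` and `F'` are
isomorphic. -/
theorem stmt6 {V W : Type} [Fintype V] [Fintype W]
    (F : SimpleGraph V) (F' : SimpleGraph W) (hF : F.Colorable 2) (hF' : F'.Colorable 2)
    (hV : ∀ v : V, ∃ u : V, F.Adj v u) (hW : ∀ w : W, ∃ u : W, F'.Adj w u)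
    (h : Nonempty (F.lineGraph ≃g F'.lineGraph)) : Nonempty (F ≃g F') := by
  obtain ⟨φ⟩ := h
  obtain ⟨f, hf, hφf⟩ := exists_injective_incidentEdges_eq_image hF hF' hV φ
  obtain ⟨g, hg, -⟩ := exists_injective_incidentEdges_eq_image hF' hF hW φ.symm
  have hbij : Function.Bijective f := (Fintype.bijective_iff_injective_and_card f).2
    ⟨hf, (Fintype.card_le_of_injective f hf).antisymm (Fintype.card_le_of_injective g hg)⟩
  exact ⟨⟨Equiv.ofBijective f hbij, adj_iff_of_incidentEdges_eq_image φ hf hφf _ _⟩⟩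
end

section
/- Let H be a finite simple graph such that every homomorphism from H to itself is an isomorphism (i.e., H is a core), let G be a finite simple graph, and let c : V(G) → V(H) be a homomorphism from G to H. Then |Hom(H,G)| = |Aut(H)| · |{h ∈ Hom(H,G) : c(h(v)) = v for all v ∈ V(H)}|. -/
/-!
Every `f : H →g G` factors uniquely as a color-prescribed homomorphism after an automorphism
of `H`. Since `H` is a core, the endomorphism `c ∘ f` is an automorphism `e`, and `f ∘ e⁻¹`
is color-prescribed. Conversely, the automorphism is recovered from `h ∘ e` as `c ∘ h ∘ e = e`,
so the factorization is unique.
-/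

open SimpleGraph

namespace SimpleGraph

variable {V W : Type*} {H : SimpleGraph V} {G : SimpleGraph W}

abbrev ColorPrescribed (c : G →g H) : Type _ := {h : H →g G // ∀ v, c (h v) = v}

def compIso (c : G →g H) (p : (H ≃g H) × ColorPrescribed c) : H →g G :=
  p.2.1.comp p.1.toHom

theorem color_compIso_apply (c : G →g H) (p : (H ≃g H) × ColorPrescribed c) (v : V) :
    c (compIso c p v) = p.1 v :=
  p.2.2 (p.1 v)

theorem compIso_injective (c : G →g H) : Function.Injective (compIso c) := by
  rintro ⟨e₁, h₁⟩ ⟨e₂, h₂⟩ heq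
  have he : e₁ = e₂ := by
    ext v
    simpa only [color_compIso_apply] using congrArg c (DFunLike.congr_fun heq v)
  subst he
  have hh : h₁ = h₂ := by
    ext w
    obtain ⟨v, rfl⟩ := e₁.surjective w
    exact DFunLike.congr_fun heq v
  rw [hh]

theorem compIso_surjective (c : G →g H)
    (hcore : ∀ f : H →g H, ∃ e : H ≃g H, ∀ v, e v = f v) :
    Function.Surjective (compIso c) := by
  intro f
  obtain ⟨e, he⟩ := hcore (c.comp f)
  have hprescribed : ∀ v, c (f (e.symm v)) = v := fun v =>
    (he (e.symm v)).symm.trans (e.apply_symm_apply v)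
  refine ⟨⟨e, f.comp e.symm.toHom, hprescribed⟩, ?_⟩
  ext v
  simp [compIso]

end SimpleGraph

theorem stmt7_general {VH VG : Type}
    (H : SimpleGraph VH) (G : SimpleGraph VG)
    (hcore : ∀ h : H →g H, ∃ e : H ≃g H, ∀ v : VH, e v = h v)
    (c : G →g H) :
    Nat.card (H →g G) =
      Nat.card (H ≃g H) * Nat.card {h : H →g G // ∀ v : VH, c (h v) = v} := by
  rw [← Nat.card_prod]
  exact (Nat.card_congr
    (Equiv.ofBijective (compIso c) ⟨compIso_injective c, compIso_surjective c hcore⟩)).symm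

/-- Let `H` be a finite core (every endomorphism of `H` is an isomorphism), `G` a finite
graph, and `c : G →g H` a homomorphism (an `H`-coloring of `G`). Then
`|Hom(H,G)| = |Aut(H)| · |{h ∈ Hom(H,G) : c(h(v)) = v for all v}|`. -/
theorem stmt7 {VH VG : Type} [Fintype VH] [Fintype VG]
    (H : SimpleGraph VH) (G : SimpleGraph VG)
    (hcore : ∀ h : H →g H, ∃ e : H ≃g H, ∀ v : VH, e v = h v)
    (c : G →g H) :
    Nat.card (H →g G) =
      Nat.card (H ≃g H) * Nat.card {h : H →g G // ∀ v : VH, c (h v) = v} :=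
  stmt7_general H G hcore c
end

section
/- Let H and G be finite simple graphs and let c : V(G) → V(H) be a function such that for every edge {u,v} of G, either c(u) = c(v) or {c(u),c(v)} ∈ E(H). Then the number of homomorphisms h from H to G such that c ∘ h : V(H) → V(H) is surjective equals |Aut(H)| times the number of homomorphisms h from H to G such that c(h(v)) = v for all v ∈ V(H). -/
/-!
If `c ∘ h` is surjective it is a bijection of the finite set `V(H)`, and the loop-admitting
condition makes it adjacency-preserving: an edge `uv` of `H` goes to an edge of `G`, whose
colors differ by injectivity and hence are adjacent in `H`. A bijective endomorphism of a
finite graph is an automorphism, so `h ↦ (c ∘ h, h ∘ (c ∘ h)⁻¹)` identifies colorful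
homomorphisms with pairs of an automorphism and a color-prescribed homomorphism; the inverse
is `(σ, h) ↦ h ∘ σ`.
-/

open Function

namespace SimpleGraph

variable {V W : Type*} {H : SimpleGraph V} {G : SimpleGraph W}

/-- Injectivity makes `Sym2.map f` an injection of the finite edge set into itself, hence onto. -/
theorem Hom.adj_of_adj_map [Finite V] (f : H →g H) (hf : Injective f) {u v : V}
    (huv : H.Adj (f u) (f v)) : H.Adj u v := by
  obtain ⟨⟨e, he⟩, hmap⟩ :=
    Finite.surjective_of_injective (Hom.mapEdgeSet.injective f hf) ⟨s(f u, f v), huv⟩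
  have : Sym2.map f e = Sym2.map f s(u, v) := congrArg Subtype.val hmap
  rw [Sym2.map.injective hf this] at he
  exact he

noncomputable def Hom.isoOfBijective [Finite V] (f : H →g H) (hf : Bijective f) : H ≃g H where
  toEquiv := Equiv.ofBijective f hf
  map_rel_iff' := ⟨f.adj_of_adj_map hf.1, f.map_adj⟩

def IsLoopAdmittingColoring (H : SimpleGraph V) (G : SimpleGraph W) (c : W → V) : Prop :=
  ∀ u v : W, G.Adj u v → c u = c v ∨ H.Adj (c u) (c v)

variable {c : W → V}

def Hom.colorComp (hc : IsLoopAdmittingColoring H G c) (h : H →g G) (hinj : Injective (c ∘ h)) :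
    H →g H where
  toFun := c ∘ h
  map_rel' huv := (hc _ _ (h.map_adj huv)).resolve_left (hinj.ne huv.ne)

noncomputable def Hom.colorAut [Finite V] (hc : IsLoopAdmittingColoring H G c) (h : H →g G)
    (hsurj : Surjective (c ∘ h)) : H ≃g H :=
  have hbij := Finite.surjective_iff_bijective.1 hsurj
  (h.colorComp hc hbij.1).isoOfBijective hbij

noncomputable def colorfulEquivAutProdPrescribed [Finite V] (hc : IsLoopAdmittingColoring H G c) :
    {h : H →g G // Surjective (c ∘ h)} ≃
      (H ≃g H) × {h : H →g G // ∀ v, c (h v) = v} where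
  toFun h :=
    let σ := h.1.colorAut hc h.2
    (σ, ⟨h.1.comp σ.symm.toHom, σ.apply_symm_apply⟩)
  invFun p :=
    ⟨p.2.1.comp p.1.toHom,
      (funext fun v => p.2.2 (p.1 v) : c ∘ p.2.1.comp p.1.toHom = p.1) ▸ p.1.surjective⟩
  left_inv h := by
    ext v
    exact congrArg h.1 ((h.1.colorAut hc h.2).symm_apply_apply v)
  right_inv := by
    rintro ⟨σ, h, hh⟩
    have hσ : ∀ hs, (h.comp σ.toHom).colorAut hc hs = σ := fun _ =>
      RelIso.ext fun v => hh (σ v)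
    ext v
    · exact hh (σ v)
    · dsimp only
      rw [hσ]
      simp

end SimpleGraph

theorem stmt8_general {VH VG : Type} [Fintype VH]
    (H : SimpleGraph VH) (G : SimpleGraph VG)
    (c : VG → VH)
    (hc : ∀ u v : VG, G.Adj u v → c u = c v ∨ H.Adj (c u) (c v)) :
    Nat.card {h : H →g G // Function.Surjective (fun v : VH => c (h v))} =
      Nat.card (H ≃g H) * Nat.card {h : H →g G // ∀ v : VH, c (h v) = v} :=
  (Nat.card_congr (SimpleGraph.colorfulEquivAutProdPrescribed hc)).trans
    (Nat.card_prod _ _)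

/-- Let `c : V(G) → V(H)` be a loop-admitting `H`-coloring of `G` (for every edge `{u,v}` of
`G`, either `c u = c v` or `{c u, c v} ∈ E(H)`). Then the number of colorful homomorphisms
from `H` to `G` (those with `c ∘ h` surjective) equals `|Aut(H)|` times the number of
color-prescribed homomorphisms (those with `c(h(v)) = v` for all `v`). -/
theorem stmt8 {VH VG : Type} [Fintype VH] [Fintype VG]
    (H : SimpleGraph VH) (G : SimpleGraph VG)
    (c : VG → VH)
    (hc : ∀ u v : VG, G.Adj u v → c u = c v ∨ H.Adj (c u) (c v)) :
    Nat.card {h : H →g G // Function.Surjective (fun v : VH => c (h v))} =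
      Nat.card (H ≃g H) * Nat.card {h : H →g G // ∀ v : VH, c (h v) = v} :=
  stmt8_general H G c hc
end

section
/- Let F and H be finite simple graphs, let c be a homomorphism from H to F, let b ≥ 1, suppose F has at least one edge, and let M be a matching in H (a set of pairwise disjoint edges) with |M| ≥ |E(F)| · b². Then there exists a partition ρ of V(H) all of whose blocks are independent sets in H such that the quotient graph H/ρ — the graph whose vertices are the blocks of ρ, with two distinct blocks adjacent iff some edge of H joins a vertex of one block to a vertex of the other — admits a homomorphism to F and contains the complete bipartite graph K_{b,b} as a subgraph. -/
/-!
Pigeonholing the darts of `M` over the darts of `F` gives an edge `xy` of `F` and `b²` edges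
`u (i, j) v (i, j)` of the matching with `c (u (i, j)) = x` and `c (v (i, j)) = y`; since `M` is a
matching, `u` and `v` are injective. Merge each row `{u (i, ·)}` and each column `{v (·, j)}` into
one block. Blocks lie in fibres of `c`, so they are independent and `c` descends to the quotient,
and row `i` is joined to column `j` by the edge `u (i, j) v (i, j)`: this is the `K_{b,b}`.
-/

open SimpleGraph

/-- The quotient graph `H/ρ` of a graph `H` by an equivalence relation `r` on its vertices:
vertices are the equivalence classes (blocks), and two distinct blocks are adjacent iff some
edge of `H` joins a vertex of one block to a vertex of the other. -/
def quotientGraph {V : Type} (H : SimpleGraph V) (r : Setoid V) :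
    SimpleGraph (Quotient r) where
  Adj a b := a ≠ b ∧ ∃ u v : V, Quotient.mk r u = a ∧ Quotient.mk r v = b ∧ H.Adj u v
  symm := ⟨fun a b ⟨hne, u, v, hu, hv, hadj⟩ => ⟨hne.symm, v, u, hv, hu, hadj.symm⟩⟩
  loopless := ⟨fun a ⟨hne, _⟩ => hne rfl⟩

namespace SimpleGraph

theorem Hom.exists_embedding_mapDart_eq {V W ι : Type*} [Fintype V] [Fintype W] [Fintype ι]
    {G : SimpleGraph V} {G' : SimpleGraph W} (φ : G →g G') (hG' : G'.edgeSet.Nonempty)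
    (hcard : Nat.card G'.edgeSet * Nat.card ι ≤ Nat.card G.edgeSet) :
    ∃ d : G'.Dart, ∃ e : ι ↪ G.Dart, ∀ k, φ.mapDart (e k) = d := by
  classical
  have : Nonempty G'.Dart := by
    obtain ⟨e, he⟩ := hG'
    induction e using Sym2.ind with
    | _ x y => exact ⟨⟨(x, y), he⟩⟩
  have hdarts : Fintype.card G'.Dart * Fintype.card ι ≤ Fintype.card G.Dart := by
    have h := Nat.mul_le_mul_left 2 hcard
    simp only [Nat.card_eq_fintype_card] at h
    rwa [dart_card_eq_twice_card_edges, dart_card_eq_twice_card_edges, edgeFinset_card,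
      edgeFinset_card, mul_assoc]
  obtain ⟨d, hd⟩ := Fintype.exists_le_card_fiber_of_mul_le_card φ.mapDart hdarts
  rw [← Fintype.card_coe] at hd
  obtain ⟨e⟩ := Function.Embedding.nonempty_of_card_le hd
  exact ⟨d, e.trans (Function.Embedding.subtype _), fun k => (Finset.mem_filter.1 (e k).2).2⟩

theorem Subgraph.IsMatching.dart_fst_injective {V : Type*} {G : SimpleGraph V} {M : G.Subgraph}
    (hM : M.IsMatching) : Function.Injective fun d : M.spanningCoe.Dart => d.fst :=
  fun d d' (h : d.fst = d'.fst) =>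
    Dart.ext _ _ (Prod.ext h (hM.eq_of_adj_left d.adj (h ▸ d'.adj)))

theorem Subgraph.IsMatching.dart_snd_injective {V : Type*} {G : SimpleGraph V} {M : G.Subgraph}
    (hM : M.IsMatching) : Function.Injective fun d : M.spanningCoe.Dart => d.snd :=
  fun d d' (h : d.snd = d'.snd) =>
    Dart.ext _ _ (Prod.ext (hM.eq_of_adj_right d.adj (h ▸ d'.adj)) h)

theorem Subgraph.IsMatching.exists_injective_edges_over_adj {V W ι : Type*} [Fintype V]
    [Fintype W] [Fintype ι] {G : SimpleGraph V} {F : SimpleGraph W} {M : G.Subgraph}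
    (hM : M.IsMatching) (c : G →g F) (hF : F.edgeSet.Nonempty)
    (hcard : Nat.card F.edgeSet * Nat.card ι ≤ Nat.card M.edgeSet) :
    ∃ x y : W, F.Adj x y ∧ ∃ u v : ι → V, u.Injective ∧ v.Injective ∧
      ∀ k, M.Adj (u k) (v k) ∧ c (u k) = x ∧ c (v k) = y := by
  obtain ⟨d, e, he⟩ := (c.comp M.spanningHom).exists_embedding_mapDart_eq hF
    (by rwa [Subgraph.edgeSet_spanningCoe])
  exact ⟨d.fst, d.snd, d.adj, fun k => (e k).fst, fun k => (e k).snd,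
    hM.dart_fst_injective.comp e.injective, hM.dart_snd_injective.comp e.injective,
    fun k => ⟨(e k).adj, congrArg (·.fst) (he k), congrArg (·.snd) (he k)⟩⟩

theorem exists_injective_hom_completeBipartiteGraph {α β V : Type*} {G : SimpleGraph V}
    {f : α → V} {g : β → V} (hf : f.Injective) (hg : g.Injective)
    (hadj : ∀ i j, G.Adj (f i) (g j)) :
    ∃ φ : completeBipartiteGraph α β →g G, Function.Injective φ :=
  ⟨⟨Sum.elim f g, by rintro (i | i) (j | j) h <;> simp_all [(hadj _ _).symm]⟩,
    hf.sumElim hg fun i j => (hadj i j).ne⟩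

end SimpleGraph

section QuotientGraph

variable {V W : Type} {H : SimpleGraph V} {F : SimpleGraph W} {r : Setoid V}

def quotientGraph.lift (c : H →g F) (hr : r ≤ Setoid.ker c) : quotientGraph H r →g F where
  toFun := Quotient.lift c fun _ _ h => hr h
  map_rel' := by
    rintro _ _ ⟨-, u, v, rfl, rfl, h⟩
    exact c.map_adj h

theorem quotientGraph.adj_mk {c : H →g F} (hr : r ≤ Setoid.ker c) {u v : V} (h : H.Adj u v) :
    (quotientGraph H r).Adj (Quotient.mk r u) (Quotient.mk r v) :=
  ⟨fun huv => (c.map_adj h).ne (hr (Quotient.exact huv)), u, v, rfl, rfl, h⟩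

end QuotientGraph

section GridRetraction

variable {α V W : Type*}

/-- For injective `u`, `v` with disjoint ranges, its fibres are the rows `{u (i, ·)}`, the
columns `{v (·, j)}` and singletons. -/
noncomputable def gridRetraction (u v : α × α → V) : V → V :=
  Function.extend u (fun k => u (k.1, k.1)) (Function.extend v (fun k => v (k.2, k.2)) id)

variable {u v : α × α → V}

theorem gridRetraction_apply_left (hu : u.Injective) (k : α × α) :
    gridRetraction u v (u k) = u (k.1, k.1) :=
  hu.extend_apply _ _ k

theorem gridRetraction_apply_right (hv : v.Injective) (huv : ∀ k k', u k ≠ v k')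
    (k : α × α) :
    gridRetraction u v (v k) = v (k.2, k.2) := by
  rw [gridRetraction, Function.extend_apply' _ _ _ fun ⟨k', h⟩ => huv k' k h, hv.extend_apply]

theorem gridRetraction_apply_of_notMem {w : V} (hwu : w ∉ Set.range u) (hwv : w ∉ Set.range v) :
    gridRetraction u v w = w := by
  rw [gridRetraction, Function.extend_apply' _ _ _ hwu, Function.extend_apply' _ _ _ hwv, id]

theorem apply_gridRetraction {f : V → W} {x y : W} (hu : u.Injective) (hv : v.Injective)
    (huv : ∀ k k', u k ≠ v k') (hfu : ∀ k, f (u k) = x) (hfv : ∀ k, f (v k) = y) (w : V) :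
    f (gridRetraction u v w) = f w := by
  by_cases hwu : w ∈ Set.range u
  · obtain ⟨k, rfl⟩ := hwu
    rw [gridRetraction_apply_left hu, hfu, hfu]
  by_cases hwv : w ∈ Set.range v
  · obtain ⟨k, rfl⟩ := hwv
    rw [gridRetraction_apply_right hv huv, hfv, hfv]
  rw [gridRetraction_apply_of_notMem hwu hwv]

end GridRetraction

theorem exists_quotientGraph_hom_and_completeBipartiteGraph_embedding {V W α : Type}
    {H : SimpleGraph V} {F : SimpleGraph W} (c : H →g F) {x y : W} (hxy : x ≠ y)
    {u v : α × α → V} (hu : u.Injective) (hv : v.Injective) (hadj : ∀ k, H.Adj (u k) (v k))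
    (hcu : ∀ k, c (u k) = x) (hcv : ∀ k, c (v k) = y) :
    ∃ r : Setoid V, (∀ a b, r a b → ¬ H.Adj a b) ∧ Nonempty (quotientGraph H r →g F) ∧
      ∃ f : completeBipartiteGraph α α →g quotientGraph H r, Function.Injective f := by
  set r := Setoid.ker (gridRetraction u v)
  have huv : ∀ k k', u k ≠ v k' := fun k k' h => hxy (by rw [← hcu k, h, hcv k'])
  have hr : r ≤ Setoid.ker c := fun a b (h : gridRetraction u v a = gridRetraction u v b) => by
    rw [Setoid.ker_def, ← apply_gridRetraction hu hv huv hcu hcv a, h,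
      apply_gridRetraction hu hv huv hcu hcv b]
  have hmk : ∀ a b, Quotient.mk r a = Quotient.mk r b ↔
      gridRetraction u v a = gridRetraction u v b := fun _ _ => Quotient.eq
  have hrow : ∀ i j, Quotient.mk r (u (i, j)) = Quotient.mk r (u (i, i)) := fun i j => by
    rw [hmk, gridRetraction_apply_left hu, gridRetraction_apply_left hu]
  have hcol : ∀ i j, Quotient.mk r (v (i, j)) = Quotient.mk r (v (j, j)) := fun i j => by
    rw [hmk, gridRetraction_apply_right hv huv, gridRetraction_apply_right hv huv]
  refine ⟨r, fun a b h hab => (c.map_adj hab).ne (hr h), ⟨quotientGraph.lift c hr⟩,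
    exists_injective_hom_completeBipartiteGraph (f := fun i => Quotient.mk r (u (i, i)))
      (g := fun j => Quotient.mk r (v (j, j))) (fun i i' h => ?_) (fun j j' h => ?_)
      fun i j => ?_⟩
  · rw [hmk, gridRetraction_apply_left hu, gridRetraction_apply_left hu] at h
    exact congrArg Prod.fst (hu h)
  · rw [hmk, gridRetraction_apply_right hv huv, gridRetraction_apply_right hv huv] at h
    exact congrArg Prod.snd (hv h)
  · rw [← hrow i j, ← hcol i j]
    exact quotientGraph.adj_mk hr (hadj (i, j))

theorem stmt12_general {VF VH : Type} [Fintype VF] [Fintype VH]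
    (F : SimpleGraph VF) (H : SimpleGraph VH) (c : H →g F) (b : ℕ)
    (hF : F.edgeSet.Nonempty) (M : H.Subgraph) (hM : M.IsMatching)
    (hcard : Nat.card F.edgeSet * b ^ 2 ≤ Nat.card M.edgeSet) :
    ∃ r : Setoid VH, (∀ u v : VH, r u v → ¬ H.Adj u v) ∧
      Nonempty (quotientGraph H r →g F) ∧
      ∃ f : completeBipartiteGraph (Fin b) (Fin b) →g quotientGraph H r,
        Function.Injective f := by
  obtain ⟨x, y, hxy, u, v, hu, hv, huv⟩ :=
    hM.exists_injective_edges_over_adj (ι := Fin b × Fin b) c hF (by simpa [sq] using hcard)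
  exact exists_quotientGraph_hom_and_completeBipartiteGraph_embedding c hxy.ne hu hv
    (fun k => M.adj_sub (huv k).1) (fun k => (huv k).2.1) fun k => (huv k).2.2

/-- Let `c : H →g F` be a homomorphism, `b ≥ 1`, `F` with at least one edge, and `M` a
matching in `H` with `|M| ≥ |E(F)| · b²`. Then there is a partition of `V(H)` into
independent sets (an equivalence relation relating only non-adjacent vertices) whose quotient
graph admits a homomorphism to `F` and contains the complete bipartite graph `K_{b,b}` as a
subgraph (i.e. admits an injective homomorphism from `K_{b,b}`). -/
theorem stmt12 {VF VH : Type} [Fintype VF] [Fintype VH]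
    (F : SimpleGraph VF) (H : SimpleGraph VH) (c : H →g F) (b : ℕ) (hb : 1 ≤ b)
    (hF : F.edgeSet.Nonempty) (M : H.Subgraph) (hM : M.IsMatching)
    (hcard : Nat.card F.edgeSet * b ^ 2 ≤ Nat.card M.edgeSet) :
    ∃ r : Setoid VH, (∀ u v : VH, r u v → ¬ H.Adj u v) ∧
      Nonempty (quotientGraph H r →g F) ∧
      ∃ f : completeBipartiteGraph (Fin b) (Fin b) →g quotientGraph H r,
        Function.Injective f :=
  stmt12_general F H c b hF M hM hcard
end
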